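/- (Correctness of DNA learning from small conditioning sets, partial-correlation form.) Let G be a DAG on a finite vertex set V, let Σ be a positive definite real matrix indexed by V, and fix λ > 0 and an integer K ≥ 0. Assume: (i) (Markov) whenever distinct u,v are d-separated given S ⊆ V∖{u,v} in G, ρ(u,v|S)=0; and (ii) (DNA-faithfulness) for all distinct u,v,z and S ⊆ V∖{u,v,z} with |S| ≤ K, if |ρ(u,v|S)| ≤ λ and |ρ(u,v|S∪{z})| > λ, then u and v are d-separated given S in G. Then for all distinct u,v,z and S ⊆ V∖{u,v,z} with |S| ≤ K such that |ρ(u,v|S)| ≤ λ and |ρ(u,v|S∪{z})| > λ, it holds that z ̸⇝ u, z ̸⇝ v, and z ̸⇝ s for every s ∈ S. -/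

import Mathlib

/-! Basic graphical-model definitions: DAGs as binary relations on a finite
vertex type, d-separation via paths (lists of vertices), Markov equivalence,
and definite (non-)ancestral relations. -/

variable {V : Type*}

/-- Two nodes are adjacent in the digraph `E` if there is an edge between them
in either direction. -/
def Adjacent (E : V → V → Prop) (a b : V) : Prop := E a b ∨ E b a

/-- A digraph is acyclic if it has no directed cycles. -/
def Acyclic (E : V → V → Prop) : Prop := ∀ v : V, ¬ Relation.TransGen E v v

/-- `u` is an ancestor of `v`: there is a directed path from `u` to `v`
(by convention, `v` is an ancestor of itself). -/
def Anc (E : V → V → Prop) (u v : V) : Prop := Relation.ReflTransGen E u v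

/-- A list of vertices is a path in the skeleton of `E`: consecutive vertices
are adjacent and no vertex repeats. -/
def IsPath (E : V → V → Prop) (p : List V) : Prop :=
  p.Nodup ∧ List.Chain' (Adjacent E) p

/-- A path `p` is d-connecting given the conditioning set `C` if every collider
on it is an ancestor of an element of `C` and every non-collider on it is
outside `C`.  Interior vertices of `p` are exactly the middle elements `x` of
consecutive triples `[a, x, b]` of `p`; such an `x` is a collider when both
incident edges point into it. -/
def IsDConnectingPath (E : V → V → Prop) (C : Set V) (p : List V) : Prop :=
  ∀ a x b : V, [a, x, b] <:+: p →
    ((E a x ∧ E b x) → ∃ c ∈ C, Anc E x c) ∧ (¬ (E a x ∧ E b x) → x ∉ C)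

/-- `u` and `v` are d-connected given `C` in `E`. -/
def DConn (E : V → V → Prop) (C : Set V) (u v : V) : Prop :=
  ∃ p : List V, IsPath E p ∧ p.head? = some u ∧ p.getLast? = some v ∧
    IsDConnectingPath E C p

/-- `u` and `v` are d-separated given `C` in `E`. -/
def DSep (E : V → V → Prop) (C : Set V) (u v : V) : Prop := ¬ DConn E C u v

/-- Two DAGs on the same vertex set are Markov equivalent if they have exactly
the same d-separation relations. -/
def MarkovEquiv (E E' : V → V → Prop) : Prop :=
  ∀ (u v : V) (C : Set V), u ≠ v → u ∉ C → v ∉ C → (DSep E C u v ↔ DSep E' C u v)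

/-- `u` is definite ancestral to `v` (`u ⇝ v`): `u` is an ancestor of `v` in
every DAG Markov equivalent to `E`. -/
def DefAnc (E : V → V → Prop) (u v : V) : Prop :=
  ∀ E' : V → V → Prop, Acyclic E' → MarkovEquiv E E' → Anc E' u v

/-- `u` is definite non-ancestral to `v` (`u ̸⇝ v`): `u` is not an ancestor of
`v` in any DAG Markov equivalent to `E`. -/
def DefNonAnc (E : V → V → Prop) (u v : V) : Prop :=
  ∀ E' : V → V → Prop, Acyclic E' → MarkovEquiv E E' → ¬ Anc E' u v

/-- The CPDAG of `E` has a directed edge `a → b` iff `a` and `b` are adjacent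
and the edge is oriented `a → b` in every member of the Markov equivalence
class of `E`. -/
def CPDAGDir (E : V → V → Prop) (a b : V) : Prop :=
  Adjacent E a b ∧ ∀ E' : V → V → Prop, Acyclic E' → MarkovEquiv E E' → E' a b

/-- A possibly directed path in the CPDAG of `E`: a path in the skeleton such
that no edge on it is directed backwards (as `x_{i+1} → x_i`) in the CPDAG. -/
def IsPossiblyDirectedPath (E : V → V → Prop) (p : List V) : Prop :=
  p.Nodup ∧ List.Chain' (fun a b => Adjacent E a b ∧ ¬ CPDAGDir E b a) p

/-- A path is unshielded if no three consecutive vertices on it are pairwise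
adjacent. -/
def UnshieldedPath (E : V → V → Prop) (p : List V) : Prop :=
  ∀ a x b : V, [a, x, b] <:+: p → ¬ Adjacent E a b

/-- The partial correlation `ρ(u, v | S)` computed from the covariance matrix
`Cov`: with `Θ` the inverse of the principal submatrix of `Cov` on
`{u, v} ∪ S`, it equals `-Θ_{uv} / √(Θ_{uu} Θ_{vv})`. -/
noncomputable def partialCorr [Fintype V] [DecidableEq V] (Cov : Matrix V V ℝ)
    (u v : V) (S : Finset V) : ℝ :=
  let T : Finset V := insert u (insert v S);
  let Th : Matrix T T ℝ := (Cov.submatrix (fun i : T => (i : V)) (fun i : T => (i : V)))⁻¹;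
  let hu : u ∈ T := Finset.mem_insert_self u _;
  let hv : v ∈ T := Finset.mem_insert_of_mem (Finset.mem_insert_self v S);
  -Th ⟨u, hu⟩ ⟨v, hv⟩ / Real.sqrt (Th ⟨u, hu⟩ ⟨u, hu⟩ * Th ⟨v, hv⟩ ⟨v, hv⟩)

/-!
By DNA-faithfulness `u` and `v` are d-separated given `S`, and since `ρ(u, v | S ∪ {z}) ≠ 0`
the Markov property makes them d-connected given `S ∪ {z}`; both facts pass to every DAG in the
Markov equivalence class. In a DAG, adding a vertex `z` to a conditioning set `C` cannot
d-connect `u` and `v` if `z` is an ancestor of `u`, of `v` or of an element of `C`. The last case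
is immediate. If `z` is an ancestor of `u`, take the collider `x` closest to `v` that is opened
only by `z`: `x` is an ancestor of `u` with no descendant in `C`, so the directed path from `x`
to `u`, followed by the part of the path from `x` to `v`, is a d-connecting walk given `C`.
Cutting loops out of a d-connecting walk keeps it d-connecting, because a loop leaving `x`
along an out-edge contains a collider that is a descendant of `x`.
-/

lemma List.exists_eq_append_cons_append_cons_of_not_nodup {α : Type*} {p : List α}
    (h : ¬ p.Nodup) : ∃ (x : α) (l₁ l₂ l₃ : List α), p = l₁ ++ x :: (l₂ ++ x :: l₃) := by
  induction p with
  | nil => exact absurd List.nodup_nil h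
  | cons a p ih =>
    by_cases ha : a ∈ p
    · obtain ⟨s, t, rfl⟩ := List.append_of_mem ha
      exact ⟨a, [], s, t, rfl⟩
    · obtain ⟨x, l₁, l₂, l₃, rfl⟩ := ih fun hp => h (List.nodup_cons.mpr ⟨ha, hp⟩)
      exact ⟨x, a :: l₁, l₂, l₃, rfl⟩

lemma List.triple_infix_append_cons {α : Type*} {l₁ l₂ : List α} {a x b : α}
    (ha : l₁.getLast? = some a) (hb : l₂.head? = some b) : [a, x, b] <:+: l₁ ++ x :: l₂ := by
  obtain ⟨s, rfl⟩ := List.getLast?_eq_some_iff.mp ha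
  obtain ⟨t, rfl⟩ := List.head?_eq_some_iff.mp hb
  exact ⟨s, t, by simp⟩

section DSeparation

variable {E : V → V → Prop} {C : Set V} {a x b z u v : V} {p l l₁ l₂ : List V}

lemma Acyclic.asymm (hE : Acyclic E) (h : E a b) : ¬ E b a :=
  fun h' => hE a ((Relation.TransGen.single h).tail h')

def OpenTriple (E : V → V → Prop) (C : Set V) (a x b : V) : Prop :=
  ((E a x ∧ E b x) → ∃ c ∈ C, Anc E x c) ∧ (¬ (E a x ∧ E b x) → x ∉ C)

lemma openTriple_of_not_collider (hcol : ¬ (E a x ∧ E b x)) (hx : x ∉ C) :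
    OpenTriple E C a x b :=
  ⟨fun h => absurd h hcol, fun _ => hx⟩

lemma OpenTriple.symm (h : OpenTriple E C a x b) : OpenTriple E C b x a :=
  ⟨fun hc => h.1 hc.symm, fun hn => h.2 fun hc => hn hc.symm⟩

/-- Cutting a loop at `x` out of a walk `⋯ a x w ⋯ w' x b ⋯` leaves the triple `[a, x, b]`. -/
lemma OpenTriple.splice {w w' : V} (h₁ : OpenTriple E C a x w) (h₂ : OpenTriple E C w' x b)
    (hw : E w x ∨ ∃ c ∈ C, Anc E x c) : OpenTriple E C a x b := by
  refine ⟨fun hcol => hw.elim (fun hwx => h₁.1 ⟨hcol.1, hwx⟩) id, fun hcol => ?_⟩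
  by_cases hax : E a x
  · exact h₂.2 fun h => hcol ⟨hax, h.2⟩
  · exact h₁.2 fun h => hax h.1

lemma OpenTriple.of_insert (h : OpenTriple E (insert z C) a x b) (hC : ¬ OpenTriple E C a x b) :
    Anc E x z ∧ ∀ c ∈ C, ¬ Anc E x c := by
  by_cases hcol : E a x ∧ E b x
  · have hno : ∀ c ∈ C, ¬ Anc E x c := fun c hc hxc =>
      hC ⟨fun _ => ⟨c, hc, hxc⟩, fun h' => absurd hcol h'⟩
    obtain ⟨c, rfl | hc, hxc⟩ := h.1 hcol
    · exact ⟨hxc, hno⟩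
    · exact absurd hxc (hno c hc)
  · exact absurd
      (openTriple_of_not_collider hcol fun hx => h.2 hcol (Set.mem_insert_of_mem z hx)) hC

lemma IsDConnectingPath.infix {q : List V} (h : IsDConnectingPath E C p) (hq : q <:+: p) :
    IsDConnectingPath E C q :=
  fun a x b hi => h a x b (hi.trans hq)

lemma IsDConnectingPath.reverse (h : IsDConnectingPath E C p) :
    IsDConnectingPath E C p.reverse := fun a x b hi =>
  OpenTriple.symm (h b x a (by simpa using List.reverse_infix.mpr hi))

lemma isDConnectingPath_singleton : IsDConnectingPath E C [a] :=
  fun _ _ _ hi => absurd hi.length_le (by simp)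

lemma isDConnectingPath_cons_cons :
    IsDConnectingPath E C (a :: x :: l) ↔
      (∀ b ∈ l.head?, OpenTriple E C a x b) ∧ IsDConnectingPath E C (x :: l) := by
  refine ⟨fun h => ⟨fun b hb => h a x b ?_, h.infix (List.suffix_cons _ _).isInfix⟩, ?_⟩
  · obtain ⟨t, rfl⟩ := List.head?_eq_some_iff.mp hb
    exact ⟨[], t, rfl⟩
  · rintro ⟨h₁, h₂⟩ a' x' b' hi
    rcases List.infix_cons_iff.mp hi with hp | hi
    · obtain ⟨rfl, hxb⟩ := List.cons_prefix_cons.mp hp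
      obtain ⟨rfl, t, rfl⟩ := List.cons_prefix_cons.mp hxb
      exact h₁ b' rfl
    · exact h₂ a' x' b' hi

lemma IsDConnectingPath.append (h₁ : IsDConnectingPath E C (l₁ ++ [x]))
    (h₂ : IsDConnectingPath E C (x :: l₂))
    (hx : ∀ a ∈ l₁.getLast?, ∀ b ∈ l₂.head?, OpenTriple E C a x b) :
    IsDConnectingPath E C (l₁ ++ x :: l₂) := by
  induction l₁ with
  | nil => exact h₂
  | cons c l₁ ih =>
    rcases l₁ with _ | ⟨d, l₁⟩
    · exact isDConnectingPath_cons_cons.mpr ⟨hx c rfl, h₂⟩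
    · obtain ⟨hcd, hd⟩ := isDConnectingPath_cons_cons.mp h₁
      refine isDConnectingPath_cons_cons.mpr ⟨fun b hb => hcd b ?_, ih hd hx⟩
      cases l₁ <;> simpa using hb

lemma isDConnectingPath_of_isChain (hE : Acyclic E) (hp : List.IsChain E p)
    (hC : ∀ y ∈ p, y ∉ C) : IsDConnectingPath E C p := fun a x b hi =>
  have hxb : E x b := by simpa using (hp.infix hi).tail
  openTriple_of_not_collider (fun h => hE.asymm hxb h.2) (hC x (hi.subset (by simp)))

/-- A walk that leaves `y` along an out-edge and ends at an ancestor of `y` cannot be directed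
all the way, so it has a collider below `y`. -/
lemma exists_collider_descendant (hE : Acyclic E) {y z w : V}
    (hc : List.IsChain (Adjacent E) (y :: z :: l)) (hyz : E y z)
    (hw : (z :: l).getLast? = some w) (hwy : Anc E w y) :
    ∃ a b c, [a, b, c] <:+: y :: z :: l ∧ E a b ∧ E c b ∧ Anc E y b := by
  induction l generalizing y z with
  | nil =>
    obtain rfl : z = w := by simpa using hw
    exact absurd (Relation.TransGen.head' hyz hwy) (hE y)
  | cons t l ih =>
    have hzt : Adjacent E z t := (List.isChain_cons_cons.mp hc).2.rel
    by_cases htz : E t z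
    · exact ⟨y, z, t, ⟨[], l, rfl⟩, hyz, htz, .single hyz⟩
    · obtain ⟨a, b, c, hi, hab, hcb, hzb⟩ :=
        ih (List.isChain_cons_cons.mp hc).2 (hzt.resolve_right htz)
          (by simpa using hw) (hwy.tail hyz)
      exact ⟨a, b, c, hi.trans (List.suffix_cons y _).isInfix, hab, hcb, .head hyz hzb⟩

lemma IsDConnectingPath.erase_loop (hE : Acyclic E) {l₃ : List V}
    (hch : List.IsChain (Adjacent E) (l₁ ++ x :: (l₂ ++ x :: l₃)))
    (hdc : IsDConnectingPath E C (l₁ ++ x :: (l₂ ++ x :: l₃))) :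
    IsDConnectingPath E C (l₁ ++ x :: l₃) := by
  refine .append (hdc.infix ⟨[], l₂ ++ x :: l₃, by simp⟩) (hdc.infix ⟨l₁ ++ x :: l₂, [], by simp⟩)
    fun a ha b hb => ?_
  obtain ⟨w, l, hwl⟩ := List.exists_cons_of_ne_nil (List.concat_ne_nil x l₂)
  have hloop : List.IsChain (Adjacent E) (x :: w :: l) := hch.infix ⟨l₁, l₃, by simp [← hwl]⟩
  have hw : E w x ∨ ∃ c ∈ C, Anc E x c := by
    refine (em (E w x)).imp id fun hwx => ?_
    obtain ⟨a', y, c', hi, hay, hcy, hxy⟩ := exists_collider_descendant hE hloop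
      ((List.isChain_cons_cons.mp hloop).1.resolve_right hwx) (by simp [← hwl]) .refl
    obtain ⟨c, hc, hyc⟩ := (hdc a' y c' (hi.trans ⟨l₁, l₃, by simp [← hwl]⟩)).1 ⟨hay, hcy⟩
    exact ⟨c, hc, hxy.trans hyc⟩
  obtain ⟨w', hw'⟩ : ∃ w', (l₁ ++ x :: l₂).getLast? = some w' :=
    Option.isSome_iff_exists.mp (by simp)
  refine OpenTriple.splice (hdc a x w (List.triple_infix_append_cons ha ?_))
    (hdc w' x b (by simpa using List.triple_infix_append_cons hw' hb)) hw
  rw [show l₂ ++ x :: l₃ = l₂ ++ [x] ++ l₃ by simp, hwl]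
  rfl

lemma exists_isPath_of_isDConnectingPath (hE : Acyclic E)
    (hch : List.IsChain (Adjacent E) p) (hdc : IsDConnectingPath E C p) :
    ∃ q, IsPath E q ∧ q.head? = p.head? ∧ q.getLast? = p.getLast? ∧ IsDConnectingPath E C q := by
  induction hn : p.length using Nat.strong_induction_on generalizing p with
  | _ n ih =>
  by_cases hnd : p.Nodup
  · exact ⟨p, ⟨hnd, hch⟩, rfl, rfl, hdc⟩
  obtain ⟨x, l₁, l₂, l₃, rfl⟩ := List.exists_eq_append_cons_append_cons_of_not_nodup hnd
  have hch' : List.IsChain (Adjacent E) (l₁ ++ [x] ++ l₃) :=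
    .append_overlap (hch.infix ⟨[], l₂ ++ x :: l₃, by simp⟩)
      (hch.infix ⟨l₁ ++ x :: l₂, [], by simp⟩) (List.cons_ne_nil x [])
  simp only [List.append_assoc, List.singleton_append] at hch'
  obtain ⟨q, hq, hhead, hlast, hdcq⟩ :=
    ih _ (by simp at hn ⊢; omega) hch' (hdc.erase_loop hE hch) rfl
  refine ⟨q, hq, hhead.trans (by cases l₁ <;> rfl), hlast.trans ?_, hdcq⟩
  rw [List.getLast?_append_of_ne_nil _ (List.cons_ne_nil _ _),
    show l₁ ++ x :: (l₂ ++ x :: l₃) = l₁ ++ x :: l₂ ++ x :: l₃ by simp,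
    List.getLast?_append_of_ne_nil _ (List.cons_ne_nil _ _)]

lemma IsDConnectingPath.of_insert (h : IsDConnectingPath E (insert z C) p) :
    IsDConnectingPath E C p ∨ ∃ x l, x :: l <:+ p ∧ IsDConnectingPath E C (x :: l) ∧
      Anc E x z ∧ ∀ c ∈ C, ¬ Anc E x c := by
  induction p with
  | nil => exact Or.inl fun _ _ _ hi => absurd hi.length_le (by simp)
  | cons a p ih =>
    rcases ih (h.infix (List.suffix_cons a p).isInfix) with hp | ⟨x, l, hs, hxl, hx⟩
    · rcases p with _ | ⟨x, l⟩
      · exact Or.inl isDConnectingPath_singleton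
      · by_cases hopen : ∀ b ∈ l.head?, OpenTriple E C a x b
        · exact Or.inl (isDConnectingPath_cons_cons.mpr ⟨hopen, hp⟩)
        · obtain ⟨b, hb, hb'⟩ := not_forall₂.mp hopen
          exact Or.inr ⟨x, l, List.suffix_cons a _, hp,
            ((isDConnectingPath_cons_cons.mp h).1 b hb).of_insert hb'⟩
    · exact Or.inr ⟨x, l, hs.trans (List.suffix_cons a p), hxl, hx⟩

lemma DConn.symm (h : DConn E C u v) : DConn E C v u := by
  obtain ⟨p, ⟨hnd, hch⟩, hu, hv, hdc⟩ := h
  refine ⟨p.reverse, ⟨List.nodup_reverse.mpr hnd, ?_⟩, by simpa using hv, by simpa using hu,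
    hdc.reverse⟩
  exact List.isChain_reverse.mpr (hch.imp fun _ _ h => h.symm)

lemma DConn.of_insert_of_anc_mem {s : V} (hzs : Anc E z s) (hs : s ∈ C)
    (h : DConn E (insert z C) u v) : DConn E C u v := by
  obtain ⟨p, hp, hu, hv, hdc⟩ := h
  refine ⟨p, hp, hu, hv, fun a x b hi => ⟨fun hcol => ?_, fun hcol hx => ?_⟩⟩
  · obtain ⟨c, rfl | hc, hxc⟩ := (hdc a x b hi).1 hcol
    exacts [⟨s, hs, hxc.trans hzs⟩, ⟨c, hc, hxc⟩]
  · exact (hdc a x b hi).2 hcol (Set.mem_insert_of_mem z hx)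

lemma DConn.of_insert_of_anc_left (hE : Acyclic E) (hzu : Anc E z u)
    (h : DConn E (insert z C) u v) : DConn E C u v := by
  obtain ⟨p, hp, hu, hv, hdc⟩ := h
  rcases hdc.of_insert with hdc | ⟨x, l, ⟨s, rfl⟩, hxl, hxz, hxC⟩
  · exact ⟨p, hp, hu, hv, hdc⟩
  obtain ⟨r, hr, hru⟩ := List.exists_isChain_cons_of_relationReflTransGen (hxz.trans hzu)
  have hrC : ∀ y ∈ x :: r, y ∉ C := fun y hy hyC =>
    hxC y hyC (hr.induction (Anc E x ·) _ (fun _ _ h hx => hx.tail h) (fun _ => .refl) y hy)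
  have hdown : IsDConnectingPath E C (r.reverse ++ [x]) := by
    simpa using (isDConnectingPath_of_isChain hE hr hrC).reverse
  have hjunction : ∀ a ∈ r.reverse.getLast?, ∀ b ∈ l.head?, OpenTriple E C a x b := by
    intro a ha b _
    obtain ⟨t, rfl⟩ := List.head?_eq_some_iff.mp (by simpa using ha)
    exact openTriple_of_not_collider (fun h => hE.asymm (List.isChain_cons_cons.mp hr).1 h.1)
      (hrC x List.mem_cons_self)
  have hup : List.IsChain (Adjacent E) (x :: r).reverse :=
    List.isChain_reverse.mpr (hr.imp fun _ _ h => Or.inr h)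
  have hch : List.IsChain (Adjacent E) (r.reverse ++ [x] ++ l) :=
    .append_overlap (by simpa using hup) (hp.2.infix ⟨s, [], by simp⟩) (List.cons_ne_nil x [])
  simp only [List.append_assoc, List.singleton_append] at hch
  obtain ⟨q, hq, hqu, hqv, hdcq⟩ :=
    exists_isPath_of_isDConnectingPath hE hch (hdown.append hxl hjunction)
  refine ⟨q, hq, hqu.trans ?_, hqv.trans ?_, hdcq⟩
  · rw [show r.reverse ++ x :: l = (x :: r).reverse ++ l by simp, List.head?_append,
      List.head?_reverse, List.getLast?_eq_some_getLast (List.cons_ne_nil x r), hru]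
    rfl
  · rwa [List.getLast?_append_of_ne_nil _ (List.cons_ne_nil _ _),
      ← List.getLast?_append_of_ne_nil s (List.cons_ne_nil _ _)]

theorem not_anc_of_dSep_of_dConn_insert (hE : Acyclic E) (hsep : DSep E C u v)
    (hconn : DConn E (insert z C) u v) :
    ¬ Anc E z u ∧ ¬ Anc E z v ∧ ∀ s ∈ C, ¬ Anc E z s :=
  ⟨fun hzu => hsep (hconn.of_insert_of_anc_left hE hzu),
    fun hzv => hsep (hconn.symm.of_insert_of_anc_left hE hzv).symm,
    fun _ hs hzs => hsep (hconn.of_insert_of_anc_mem hzs hs)⟩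

end DSeparation

theorem stmt7_general [Fintype V] [DecidableEq V] (E : V → V → Prop)
    (Cov : Matrix V V ℝ) (lam : ℝ) (hlam : 0 < lam) (K : ℕ)
    (hMarkov : ∀ (u v : V) (S : Finset V), u ≠ v → u ∉ S → v ∉ S →
      DSep E (↑S : Set V) u v → partialCorr Cov u v S = 0)
    (hFaith : ∀ (u v z : V) (S : Finset V), u ≠ v → u ≠ z → v ≠ z →
      u ∉ S → v ∉ S → z ∉ S → S.card ≤ K →
      |partialCorr Cov u v S| ≤ lam → lam < |partialCorr Cov u v (insert z S)| →
      DSep E (↑S : Set V) u v) :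
    ∀ (u v z : V) (S : Finset V), u ≠ v → u ≠ z → v ≠ z →
      u ∉ S → v ∉ S → z ∉ S → S.card ≤ K →
      |partialCorr Cov u v S| ≤ lam → lam < |partialCorr Cov u v (insert z S)| →
      DefNonAnc E z u ∧ DefNonAnc E z v ∧ ∀ s ∈ S, DefNonAnc E z s := by
  intro u v z S huv huz hvz huS hvS hzS hK hle hgt
  have hsep : DSep E S u v := hFaith u v z S huv huz hvz huS hvS hzS hK hle hgt
  have hconn : DConn E (insert z S) u v := by
    by_contra hsepz
    have h0 := hMarkov u v (insert z S) huv (by simp [huz, huS]) (by simp [hvz, hvS])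
      (by rwa [Finset.coe_insert])
    rw [h0, abs_zero] at hgt
    exact hgt.not_gt hlam
  have hnot (E' : V → V → Prop) (hE' : Acyclic E') (hequiv : MarkovEquiv E E') :=
    not_anc_of_dSep_of_dConn_insert hE'
      ((hequiv u v S huv (by simpa using huS) (by simpa using hvS)).mp hsep)
      (not_not.mp fun h =>
        (hequiv u v _ huv (by simp [huz, huS]) (by simp [hvz, hvS])).mpr h hconn)
  exact ⟨fun E' hE' hequiv => (hnot E' hE' hequiv).1,
    fun E' hE' hequiv => (hnot E' hE' hequiv).2.1,
    fun s hs E' hE' hequiv => (hnot E' hE' hequiv).2.2 s hs⟩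

/-- Theorem 2, correctness of DNA learning from small
conditioning sets, partial-correlation form. -/
theorem stmt7 [Fintype V] [DecidableEq V] (E : V → V → Prop) (hE : Acyclic E)
    (Cov : Matrix V V ℝ) (hCov : Cov.PosDef) (lam : ℝ) (hlam : 0 < lam) (K : ℕ)
    (hMarkov : ∀ (u v : V) (S : Finset V), u ≠ v → u ∉ S → v ∉ S →
      DSep E (↑S : Set V) u v → partialCorr Cov u v S = 0)
    (hFaith : ∀ (u v z : V) (S : Finset V), u ≠ v → u ≠ z → v ≠ z →
      u ∉ S → v ∉ S → z ∉ S → S.card ≤ K →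
      |partialCorr Cov u v S| ≤ lam → lam < |partialCorr Cov u v (insert z S)| →
      DSep E (↑S : Set V) u v) :
    ∀ (u v z : V) (S : Finset V), u ≠ v → u ≠ z → v ≠ z →
      u ∉ S → v ∉ S → z ∉ S → S.card ≤ K →
      |partialCorr Cov u v S| ≤ lam → lam < |partialCorr Cov u v (insert z S)| →
      DefNonAnc E z u ∧ DefNonAnc E z v ∧ ∀ s ∈ S, DefNonAnc E z s :=
  stmt7_general E Cov lam hlam K hMarkov hFaith
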